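/- Let 1 ≤ p ≤ q < ∞ with 1/r = 1/p − 1/q and let X be a p-concave Banach function lattice on a σ-finite measure space with p-concavity constant M_(p)(X). Then the identity map ι : X → X is p-strongly q-concave with constant M_(p)(X); explicitly, ( ∑_{k=1}^n ‖x_k‖_X^q )^{1/q} ≤ M_(p)(X) · sup_{(β_k) ∈ B_r^n} ‖ ( ∑_{k=1}^n |β_k x_k|^p )^{1/p} ‖_X for every finite sequence (x_k)_{k=1}^n in X. -/

import Mathlib

open MeasureTheory Filter

noncomputable section

section Preamble

variable {Ω : Type} [MeasurableSpace Ω] {μ : Measure Ω}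

/-- The a.e.-class of `ω ↦ |f ω| ^ e` (real power). -/
def rpowAbs (e : ℝ) (f : Ω →ₘ[μ] ℝ) : Ω →ₘ[μ] ℝ :=
  AEEqFun.mk (fun ω => |f ω| ^ e)
    (((measurable_abs.comp_aemeasurable f.aestronglyMeasurable.aemeasurable).pow
        aemeasurable_const).aestronglyMeasurable)

/-- The a.e.-class of `ω ↦ (∑ k, |x k ω| ^ p) ^ (1/p)`. -/
def pSum (p : ℝ) {n : ℕ} (x : Fin n → (Ω →ₘ[μ] ℝ)) : Ω →ₘ[μ] ℝ :=
  AEEqFun.mk (fun ω => (∑ k, |x k ω| ^ p) ^ p⁻¹)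
    (((Finset.aemeasurable_fun_sum Finset.univ fun k _ =>
        ((measurable_abs.comp_aemeasurable (x k).aestronglyMeasurable.aemeasurable).pow
          aemeasurable_const)).pow
      aemeasurable_const).aestronglyMeasurable)

/-- A Banach function lattice on a measure space `(Ω, μ)`: an order ideal of `L⁰(μ)`
equipped with a complete lattice norm. -/
structure BFL (Ω : Type) [MeasurableSpace Ω] (μ : Measure Ω) where
  mem : (Ω →ₘ[μ] ℝ) → Prop
  nrm : (Ω →ₘ[μ] ℝ) → ℝ
  zero_mem : mem 0
  add_mem : ∀ f g, mem f → mem g → mem (f + g)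
  smul_mem : ∀ (c : ℝ) f, mem f → mem (c • f)
  ideal : ∀ f g, mem g → |f| ≤ |g| → mem f
  nrm_nonneg : ∀ f, 0 ≤ nrm f
  nrm_eq_zero : ∀ f, mem f → nrm f = 0 → f = 0
  nrm_triangle : ∀ f g, mem f → mem g → nrm (f + g) ≤ nrm f + nrm g
  nrm_smul : ∀ (c : ℝ) f, mem f → nrm (c • f) = |c| * nrm f
  nrm_mono : ∀ f g, mem g → |f| ≤ |g| → nrm f ≤ nrm g
  complete : ∀ u : ℕ → (Ω →ₘ[μ] ℝ), (∀ n, mem (u n)) →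
    (∀ ε : ℝ, 0 < ε → ∃ N, ∀ m ≥ N, ∀ k ≥ N, nrm (u m - u k) < ε) →
    ∃ f, mem f ∧ Tendsto (fun n => nrm (u n - f)) atTop (nhds 0)

/-- `p`-convexity with constant `C`. -/
def BFL.pConvex (X : BFL Ω μ) (p C : ℝ) : Prop :=
  ∀ (n : ℕ) (x : Fin n → (Ω →ₘ[μ] ℝ)), (∀ k, X.mem (x k)) →
    X.mem (pSum p x) ∧ X.nrm (pSum p x) ≤ C * (∑ k, X.nrm (x k) ^ p) ^ p⁻¹

/-- `p`-concavity with constant `C`. -/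
def BFL.pConcave (X : BFL Ω μ) (p C : ℝ) : Prop :=
  ∀ (n : ℕ) (x : Fin n → (Ω →ₘ[μ] ℝ)), (∀ k, X.mem (x k)) →
    (∑ k, X.nrm (x k) ^ p) ^ p⁻¹ ≤ C * X.nrm (pSum p x)

/-- Order continuity of a function norm: decreasing sequences with infimum `0`
have norms tending to `0`. -/
def OrderContOn (mem : (Ω →ₘ[μ] ℝ) → Prop) (nrm : (Ω →ₘ[μ] ℝ) → ℝ) : Prop :=
  ∀ f : ℕ → (Ω →ₘ[μ] ℝ), (∀ n, mem (f n)) → (∀ n, f (n + 1) ≤ f n) → (∀ n, 0 ≤ f n) →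
    (∀ g, (∀ n, g ≤ f n) → g ≤ 0) → Tendsto (fun n => nrm (f n)) atTop (nhds 0)

/-- Order continuity of a Banach function lattice. -/
def BFL.OrderCont (X : BFL Ω μ) : Prop := OrderContOn X.mem X.nrm

/-- The Fatou property. -/
def BFL.Fatou (X : BFL Ω μ) : Prop :=
  ∀ (f : ℕ → (Ω →ₘ[μ] ℝ)) (g : Ω →ₘ[μ] ℝ), (∀ n, X.mem (f n)) → (∀ n, 0 ≤ f n) →
    Monotone f → (∀ n, f n ≤ g) → (∀ h, (∀ n, f n ≤ h) → g ≤ h) →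
    BddAbove (Set.range fun n => X.nrm (f n)) →
    X.mem g ∧ Tendsto (fun n => X.nrm (f n)) atTop (nhds (X.nrm g))

/-- The closed unit ball `B_r^n` of `ℓ_r^n` where `1/r = 1/p - 1/q` (`r = ∞` when `p = q`). -/
def strongBall (p q : ℝ) (n : ℕ) : Set (Fin n → ℝ) :=
  {β | if p = q then ∀ k, |β k| ≤ 1 else ∑ k, |β k| ^ (1 / p - 1 / q)⁻¹ ≤ 1}

/-- `sup_{β ∈ B_r^n} ‖(∑_k |β_k x_k|^p)^{1/p}‖`, where `1/r = 1/p - 1/q`. -/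
def strongSup (nrm : (Ω →ₘ[μ] ℝ) → ℝ) (p q : ℝ) {n : ℕ} (x : Fin n → (Ω →ₘ[μ] ℝ)) : ℝ :=
  ⨆ β : strongBall p q n, nrm (pSum p fun k => β.1 k • x k)

/-- Membership in the `p`-concavification: `f ∈ X_p ↔ |f|^{1/p} ∈ X`. -/
def cMem (mem : (Ω →ₘ[μ] ℝ) → Prop) (p : ℝ) (f : Ω →ₘ[μ] ℝ) : Prop := mem (rpowAbs p⁻¹ f)

/-- The norm of the `p`-concavification: `‖f‖_{X_p} = ‖|f|^{1/p}‖_X ^ p`. -/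
def cNrm (nrm : (Ω →ₘ[μ] ℝ) → ℝ) (p : ℝ) (f : Ω →ₘ[μ] ℝ) : ℝ := nrm (rpowAbs p⁻¹ f) ^ p

/-- The positive part of the closed dual unit ball of a function norm: positive functionals
of norm at most one, as bare functions on `L⁰`. -/
def dualBallPos (mem : (Ω →ₘ[μ] ℝ) → Prop) (nrm : (Ω →ₘ[μ] ℝ) → ℝ) :
    Set ((Ω →ₘ[μ] ℝ) → ℝ) :=
  {φ | (∀ f g, mem f → mem g → φ (f + g) = φ f + φ g) ∧
       (∀ (c : ℝ) f, mem f → φ (c • f) = c * φ f) ∧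
       (∀ f, mem f → 0 ≤ f → 0 ≤ φ f) ∧
       (∀ f, mem f → |φ f| ≤ nrm f)}

/-- The closed dual unit ball of a function norm. -/
def dualBall (mem : (Ω →ₘ[μ] ℝ) → Prop) (nrm : (Ω →ₘ[μ] ℝ) → ℝ) :
    Set ((Ω →ₘ[μ] ℝ) → ℝ) :=
  {φ | (∀ f g, mem f → mem g → φ (f + g) = φ f + φ g) ∧
       (∀ (c : ℝ) f, mem f → φ (c • f) = c * φ f) ∧
       (∀ f, mem f → |φ f| ≤ nrm f)}

/-- The positive part of the dual unit ball, as a type carrying the weak* (pointwise)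
topology and its Borel σ-algebra. -/
def DualPos (mem : (Ω →ₘ[μ] ℝ) → Prop) (nrm : (Ω →ₘ[μ] ℝ) → ℝ) : Type _ :=
  ↥(dualBallPos mem nrm)

instance {mem : (Ω →ₘ[μ] ℝ) → Prop} {nrm : (Ω →ₘ[μ] ℝ) → ℝ} :
    TopologicalSpace (DualPos (μ := μ) mem nrm) :=
  inferInstanceAs (TopologicalSpace ↥(dualBallPos mem nrm))

instance {mem : (Ω →ₘ[μ] ℝ) → Prop} {nrm : (Ω →ₘ[μ] ℝ) → ℝ} :
    MeasurableSpace (DualPos (μ := μ) mem nrm) := borel _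

instance {mem : (Ω →ₘ[μ] ℝ) → Prop} {nrm : (Ω →ₘ[μ] ℝ) → ℝ} :
    BorelSpace (DualPos (μ := μ) mem nrm) := ⟨rfl⟩

/-- Evaluation of a functional in the dual ball. -/
def DualPos.app {mem : (Ω →ₘ[μ] ℝ) → Prop} {nrm : (Ω →ₘ[μ] ℝ) → ℝ}
    (φ : DualPos (μ := μ) mem nrm) (f : Ω →ₘ[μ] ℝ) : ℝ :=
  Subtype.val φ f

/-- The seminorm `‖f‖_{p,q,ν} = (∫ ⟨|f|^p, φ⟩^{q/p} dν(φ))^{1/q}`. -/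
def pqNrm {mem : (Ω →ₘ[μ] ℝ) → Prop} {nrm : (Ω →ₘ[μ] ℝ) → ℝ} (p q : ℝ)
    (ν : Measure (DualPos (μ := μ) mem nrm)) (f : Ω →ₘ[μ] ℝ) : ℝ :=
  (∫ φ, (DualPos.app φ (rpowAbs p f)) ^ (q / p) ∂ν) ^ q⁻¹

/-- Membership in the Köthe dual of a function space. -/
def kMem (mem : (Ω →ₘ[μ] ℝ) → Prop) (h : Ω →ₘ[μ] ℝ) : Prop :=
  ∀ f, mem f → ∫⁻ ω, ENNReal.ofReal |f ω * h ω| ∂μ < ⊤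

/-- The Köthe dual norm. -/
def kNrm (mem : (Ω →ₘ[μ] ℝ) → Prop) (nrm : (Ω →ₘ[μ] ℝ) → ℝ) (h : Ω →ₘ[μ] ℝ) : ℝ :=
  ⨆ f : {f : Ω →ₘ[μ] ℝ // mem f ∧ nrm f ≤ 1}, ∫ ω, |f.1 ω * h ω| ∂μ

/-- The positive part of the closed unit ball of the Köthe dual. -/
def kothePosBall (mem : (Ω →ₘ[μ] ℝ) → Prop) (nrm : (Ω →ₘ[μ] ℝ) → ℝ) :
    Set (Ω →ₘ[μ] ℝ) :=
  {h | 0 ≤ h ∧ ∀ f, mem f → ∫⁻ ω, ENNReal.ofReal |f ω * h ω| ∂μ ≤ ENNReal.ofReal (nrm f)}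

/-- The positive part of the Köthe-dual unit ball, as a type carrying the topology
`σ(X', X)` of pointwise convergence of the pairings, and its Borel σ-algebra. -/
def KBallPos (mem : (Ω →ₘ[μ] ℝ) → Prop) (nrm : (Ω →ₘ[μ] ℝ) → ℝ) : Type _ :=
  ↥(kothePosBall (μ := μ) mem nrm)

/-- The underlying function of an element of the Köthe-dual ball. -/
def KBallPos.fn {mem : (Ω →ₘ[μ] ℝ) → Prop} {nrm : (Ω →ₘ[μ] ℝ) → ℝ}
    (h : KBallPos (μ := μ) mem nrm) : Ω →ₘ[μ] ℝ :=
  Subtype.val h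

instance {mem : (Ω →ₘ[μ] ℝ) → Prop} {nrm : (Ω →ₘ[μ] ℝ) → ℝ} :
    TopologicalSpace (KBallPos (μ := μ) mem nrm) :=
  TopologicalSpace.induced
    (fun h => fun f : (Ω →ₘ[μ] ℝ) => ∫ ω, f ω * (KBallPos.fn h) ω ∂μ) Pi.topologicalSpace

instance {mem : (Ω →ₘ[μ] ℝ) → Prop} {nrm : (Ω →ₘ[μ] ℝ) → ℝ} :
    MeasurableSpace (KBallPos (μ := μ) mem nrm) := borel _

/-- Membership in the space `S^q_{X_p}(ξ)`. -/
def sMem {mem : (Ω →ₘ[μ] ℝ) → Prop} {nrm : (Ω →ₘ[μ] ℝ) → ℝ} (p q : ℝ)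
    (ξ : Measure (KBallPos (μ := μ) mem nrm)) (f : Ω →ₘ[μ] ℝ) : Prop :=
  (∫⁻ h, (∫⁻ ω, ENNReal.ofReal (|f ω| ^ p * (KBallPos.fn h) ω) ∂μ) ^ (q / p) ∂ξ) < ⊤

/-- The norm of the space `S^q_{X_p}(ξ)`:
`‖f‖ = (∫ (∫ |f|^p h dμ)^{q/p} dξ(h))^{1/q}`. -/
def sNrm {mem : (Ω →ₘ[μ] ℝ) → Prop} {nrm : (Ω →ₘ[μ] ℝ) → ℝ} (p q : ℝ)
    (ξ : Measure (KBallPos (μ := μ) mem nrm)) (f : Ω →ₘ[μ] ℝ) : ℝ :=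
  ((∫⁻ h, (∫⁻ ω, ENNReal.ofReal (|f ω| ^ p * (KBallPos.fn h) ω) ∂μ) ^ (q / p) ∂ξ) ^ q⁻¹).toReal

end Preamble

section Operators

/-- A bounded linear operator between Banach function lattices, as a map of `L⁰` spaces. -/
def IsBddOp {Ω₁ Ω₂ : Type} [MeasurableSpace Ω₁] [MeasurableSpace Ω₂]
    {μ₁ : Measure Ω₁} {μ₂ : Measure Ω₂} (X : BFL Ω₁ μ₁) (Y : BFL Ω₂ μ₂)
    (T : (Ω₁ →ₘ[μ₁] ℝ) → (Ω₂ →ₘ[μ₂] ℝ)) : Prop :=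
  (∀ f, X.mem f → Y.mem (T f)) ∧
  (∀ f g, X.mem f → X.mem g → T (f + g) = T f + T g) ∧
  (∀ (c : ℝ) f, X.mem f → T (c • f) = c • T f) ∧
  ∃ K, ∀ f, X.mem f → Y.nrm (T f) ≤ K * X.nrm f

/-- A bounded linear operator from a Banach function lattice into a normed space. -/
def IsBddOpE {Ω : Type} [MeasurableSpace Ω] {μ : Measure Ω} (X : BFL Ω μ) {E : Type}
    [NormedAddCommGroup E] [NormedSpace ℝ E] (T : (Ω →ₘ[μ] ℝ) → E) : Prop :=
  (∀ f g, X.mem f → X.mem g → T (f + g) = T f + T g) ∧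
  (∀ (c : ℝ) f, X.mem f → T (c • f) = c • T f) ∧
  ∃ K, ∀ f, X.mem f → ‖T f‖ ≤ K * X.nrm f

/-- `T : X → Y` is `(p₁,p₂)`-strongly `(q₁,q₂)`-concave with constant `C`:
`|∑ₖ ⟨T xₖ, yₖ'⟩| ≤ C · sup_{α ∈ B_{r₁}} ‖(∑ |αₖ xₖ|^{p₁})^{1/p₁}‖_X ·
sup_{β ∈ B_{r₂}} ‖(∑ |βₖ yₖ'|^{p₂})^{1/p₂}‖_{Y'}` for all finite sequences in `X` and `Y'`. -/
def StrongPair {Ω₁ Ω₂ : Type} [MeasurableSpace Ω₁] [MeasurableSpace Ω₂]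
    {μ₁ : Measure Ω₁} {μ₂ : Measure Ω₂} (X : BFL Ω₁ μ₁) (Y : BFL Ω₂ μ₂)
    (p₁ q₁ p₂ q₂ : ℝ) (T : (Ω₁ →ₘ[μ₁] ℝ) → (Ω₂ →ₘ[μ₂] ℝ)) (C : ℝ) : Prop :=
  ∀ (n : ℕ) (x : Fin n → (Ω₁ →ₘ[μ₁] ℝ)) (y : Fin n → (Ω₂ →ₘ[μ₂] ℝ)),
    (∀ k, X.mem (x k)) → (∀ k, kMem Y.mem (y k)) →
    |∑ k, ∫ ω, (T (x k)) ω * (y k) ω ∂μ₂| ≤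
      C * (strongSup X.nrm p₁ q₁ x * strongSup (kNrm Y.mem Y.nrm) p₂ q₂ y)

/-- A bounded `m`-linear operator on a product of Banach function lattices. -/
def MultilinearBdd {m : ℕ} {Ω : Fin m → Type} [∀ j, MeasurableSpace (Ω j)]
    {μ : ∀ j, Measure (Ω j)} (X : ∀ j, BFL (Ω j) (μ j))
    {Y : Type} [NormedAddCommGroup Y] [NormedSpace ℝ Y]
    (T : (∀ j, (Ω j →ₘ[μ j] ℝ)) → Y) : Prop :=
  (∀ x, (∀ j, (X j).mem (x j)) → ∀ j f g, (X j).mem f → (X j).mem g →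
      T (Function.update x j (f + g)) = T (Function.update x j f) + T (Function.update x j g)) ∧
  (∀ x, (∀ j, (X j).mem (x j)) → ∀ j (c : ℝ) f, (X j).mem f →
      T (Function.update x j (c • f)) = c • T (Function.update x j f)) ∧
  ∃ K, ∀ x, (∀ j, (X j).mem (x j)) → ‖T x‖ ≤ K * ∏ j, (X j).nrm (x j)

/-- An `m`-linear operator is `(p₁,…,p_m)`-strongly `(q₁,…,q_m)`-concave with constant `C`,
where `1/q = ∑ⱼ 1/qⱼ`:
`(∑ₖ ‖T(x¹ₖ,…,xᵐₖ)‖^q)^{1/q} ≤ C ∏ⱼ sup_{βʲ ∈ B_{rⱼ}} ‖(∑ₖ |βʲₖ xʲₖ|^{pⱼ})^{1/pⱼ}‖_{Xⱼ}`. -/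
def StronglyConcaveML {m : ℕ} {Ω : Fin m → Type} [∀ j, MeasurableSpace (Ω j)]
    {μ : ∀ j, Measure (Ω j)} (X : ∀ j, BFL (Ω j) (μ j)) (p q : Fin m → ℝ)
    {Y : Type} [NormedAddCommGroup Y]
    (T : (∀ j, (Ω j →ₘ[μ j] ℝ)) → Y) (C : ℝ) : Prop :=
  ∀ (n : ℕ) (x : ∀ j, Fin n → (Ω j →ₘ[μ j] ℝ)), (∀ j k, (X j).mem (x j k)) →
    (∑ k, ‖T fun j => x j k‖ ^ (∑ j, (q j)⁻¹)⁻¹) ^ (∑ j, (q j)⁻¹) ≤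
      C * ∏ j, strongSup (X j).nrm (p j) (q j) (x j)

/-- A Banach space, packaged as a structure. -/
structure BanachSpaceStruct where
  E : Type
  grp : NormedAddCommGroup E
  mod : NormedSpace ℝ E
  cpl : CompleteSpace E

attribute [instance] BanachSpaceStruct.grp BanachSpaceStruct.mod BanachSpaceStruct.cpl

end Operators

/-!
Given `x₁, …, xₙ`, weight them by the extremal vector of Hölder's inequality
`‖(aₖbₖ)‖_p ≤ ‖a‖_r ‖b‖_q`: with `tₖ = ‖xₖ‖_X` and `βₖ = (tₖ^q / ∑ⱼ tⱼ^q)^{1/r}`, the vector `β`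
lies in `B_r^n` and `(∑ₖ ‖βₖxₖ‖^p)^{1/p} = (∑ₖ tₖ^q)^{1/q}`. Applying `p`-concavity to the
family `(βₖxₖ)` bounds the left side by `M_(p)(X) ‖(∑ₖ |βₖxₖ|^p)^{1/p}‖_X`, which is one of the
terms of the supremum. Since `|βₖ| ≤ 1` on `B_r^n`, all these terms are dominated by
`‖∑ₖ |xₖ|‖_X`, so the supremum is a genuine one.
-/

theorem Finset.sum_rpow_le_rpow_sum {ι : Type*} (s : Finset ι) {f : ι → ℝ}
    (hf : ∀ i ∈ s, 0 ≤ f i) {p : ℝ} (hp : 1 ≤ p) :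
    ∑ i ∈ s, f i ^ p ≤ (∑ i ∈ s, f i) ^ p := by
  induction s using Finset.cons_induction with
  | empty => simp [Real.zero_rpow (by linarith : p ≠ 0)]
  | cons a s ha ih =>
    rw [Finset.forall_mem_cons] at hf
    rw [Finset.sum_cons, Finset.sum_cons]
    calc f a ^ p + ∑ i ∈ s, f i ^ p ≤ f a ^ p + (∑ i ∈ s, f i) ^ p := by gcongr; exact ih hf.2
      _ ≤ (f a + ∑ i ∈ s, f i) ^ p :=
        Real.add_rpow_le_rpow_add hf.1 (Finset.sum_nonneg hf.2) hp

theorem rpow_sum_abs_mul_le_sum_abs {ι : Type*} [Fintype ι] {p : ℝ} (hp : 1 ≤ p)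
    {β a : ι → ℝ} (hβ : ∀ k, |β k| ≤ 1) :
    (∑ k, |β k * a k| ^ p) ^ p⁻¹ ≤ ∑ k, |a k| := by
  have hsum : 0 ≤ ∑ k, |a k| := Finset.sum_nonneg fun k _ => abs_nonneg _
  calc (∑ k, |β k * a k| ^ p) ^ p⁻¹ ≤ ((∑ k, |a k|) ^ p) ^ p⁻¹ := by
        gcongr
        calc ∑ k, |β k * a k| ^ p ≤ ∑ k, |a k| ^ p := by
              refine Finset.sum_le_sum fun k _ => Real.rpow_le_rpow (abs_nonneg _) ?_ (by linarith)
              rw [abs_mul]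
              exact mul_le_of_le_one_left (abs_nonneg _) (hβ k)
          _ ≤ (∑ k, |a k|) ^ p :=
              Finset.univ.sum_rpow_le_rpow_sum (fun k _ => abs_nonneg _) hp
    _ = ∑ k, |a k| := Real.rpow_rpow_inv hsum (by linarith)

section StrongBall

variable {p q : ℝ} {n : ℕ}

theorem abs_le_one_of_mem_strongBall (hp : 0 < p) (hpq : p ≤ q) {β : Fin n → ℝ}
    (hβ : β ∈ strongBall p q n) (k : Fin n) : |β k| ≤ 1 := by
  unfold strongBall at hβ
  split_ifs at hβ with hpq'
  · exact hβ k
  have hr : 0 < (1 / p - 1 / q)⁻¹ := by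
    have : 1 / q < 1 / p := one_div_lt_one_div_of_lt hp (lt_of_le_of_ne hpq hpq')
    exact inv_pos.2 (by linarith)
  by_contra! hk
  have : |β k| ^ (1 / p - 1 / q)⁻¹ ≤ 1 :=
    (Finset.single_le_sum (fun j _ => Real.rpow_nonneg (abs_nonneg (β j)) _)
      (Finset.mem_univ k)).trans hβ
  exact (Real.one_lt_rpow hk hr).not_ge this

def strongWeight {ι : Type*} [Fintype ι] (p q : ℝ) (t : ι → ℝ) : ι → ℝ :=
  fun k => (t k ^ q / ∑ j, t j ^ q) ^ (1 / p - 1 / q)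

variable {ι : Type*} [Fintype ι] {t : ι → ℝ}

theorem strongWeight_nonneg (ht : ∀ k, 0 ≤ t k) (k : ι) : 0 ≤ strongWeight p q t k :=
  Real.rpow_nonneg (div_nonneg (Real.rpow_nonneg (ht k) q)
    (Finset.sum_nonneg fun j _ => Real.rpow_nonneg (ht j) q)) _

theorem sum_strongWeight_mul_rpow (hp : 0 < p) (hq : 0 < q) (ht : ∀ k, 0 ≤ t k) :
    ∑ k, (strongWeight p q t k * t k) ^ p = (∑ k, t k ^ q) ^ (p / q) := by
  set S := ∑ j, t j ^ q
  have hS : 0 ≤ S := Finset.sum_nonneg fun j _ => Real.rpow_nonneg (ht j) q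
  -- No case split on `S = 0` is needed: `rpow_add'` and `rpow_one_sub'` only ask for
  -- nonzero exponents, so the junk value `0 / 0 = 0` is harmless.
  have hterm : ∀ k, (strongWeight p q t k * t k) ^ p = t k ^ q / S ^ ((1 / p - 1 / q) * p) := by
    intro k
    have hexp : q * ((1 / p - 1 / q) * p) + p = q := by field_simp; ring
    rw [strongWeight, Real.mul_rpow (Real.rpow_nonneg (div_nonneg
        (Real.rpow_nonneg (ht k) q) hS) _) (ht k), ← Real.rpow_mul (div_nonneg
        (Real.rpow_nonneg (ht k) q) hS), Real.div_rpow (Real.rpow_nonneg (ht k) q) hS,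
      ← Real.rpow_mul (ht k), div_mul_eq_mul_div, ← Real.rpow_add' (ht k) (by linarith), hexp]
  have hexp : 1 - (1 / p - 1 / q) * p = p / q := by field_simp; ring
  rw [Finset.sum_congr rfl fun k _ => hterm k, ← Finset.sum_div,
    ← Real.rpow_one_sub' hS (by rw [hexp]; positivity), hexp]

theorem strongWeight_mem_strongBall (hp : 0 < p) (hpq : p ≤ q)
    {t : Fin n → ℝ} (ht : ∀ k, 0 ≤ t k) : strongWeight p q t ∈ strongBall p q n := by
  unfold strongBall
  split_ifs with hpq'
  · intro k
    simp [strongWeight, hpq']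
  have hs : 1 / p - 1 / q ≠ 0 := by
    have : 1 / q < 1 / p := one_div_lt_one_div_of_lt hp (lt_of_le_of_ne hpq hpq')
    linarith
  have hS : 0 ≤ ∑ j, t j ^ q := Finset.sum_nonneg fun j _ => Real.rpow_nonneg (ht j) q
  have hterm : ∀ k, |strongWeight p q t k| ^ (1 / p - 1 / q)⁻¹ = t k ^ q / ∑ j, t j ^ q := by
    intro k
    rw [abs_of_nonneg (strongWeight_nonneg ht k), strongWeight,
      ← Real.rpow_mul (div_nonneg (Real.rpow_nonneg (ht k) q) hS), mul_inv_cancel₀ hs,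
      Real.rpow_one]
  rw [Set.mem_ofPred_eq, Finset.sum_congr rfl fun k _ => hterm k, ← Finset.sum_div]
  exact div_self_le_one _

end StrongBall

theorem coeFn_pSum {Ω : Type} [MeasurableSpace Ω] {μ : Measure Ω} (p : ℝ) {n : ℕ}
    (x : Fin n → Ω →ₘ[μ] ℝ) : ⇑(pSum p x) =ᵐ[μ] fun ω => (∑ k, |x k ω| ^ p) ^ p⁻¹ :=
  AEEqFun.coeFn_mk _ _

namespace BFL

variable {Ω : Type} [MeasurableSpace Ω] {μ : Measure Ω} (X : BFL Ω μ)

theorem abs_mem {f : Ω →ₘ[μ] ℝ} (hf : X.mem f) : X.mem |f| := by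
  refine X.ideal _ _ hf ?_
  rw [← AEEqFun.coeFn_le]
  filter_upwards [AEEqFun.coeFn_abs |f|, AEEqFun.coeFn_abs f] with ω h₁ h₂
  simp only [h₁, h₂, abs_abs, le_refl]

theorem sum_mem {ι : Type*} (s : Finset ι) {f : ι → Ω →ₘ[μ] ℝ} (hf : ∀ i ∈ s, X.mem (f i)) :
    X.mem (∑ i ∈ s, f i) :=
  Finset.sum_induction _ X.mem X.add_mem X.zero_mem hf

variable {p q C : ℝ} {n : ℕ} {x : Fin n → Ω →ₘ[μ] ℝ}

theorem nrm_pSum_smul_le (hp : 1 ≤ p) (hx : ∀ k, X.mem (x k)) {β : Fin n → ℝ}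
    (hβ : ∀ k, |β k| ≤ 1) : X.nrm (pSum p fun k => β k • x k) ≤ X.nrm (∑ k, |x k|) := by
  refine X.nrm_mono _ _ (X.sum_mem _ fun k _ => X.abs_mem (hx k)) ?_
  rw [← AEEqFun.coeFn_le]
  have hcoe : ∀ᵐ ω ∂μ, ∀ k, (β k • x k) ω = β k * x k ω ∧ (|x k| : Ω →ₘ[μ] ℝ) ω = |x k ω| := by
    refine ae_all_iff.2 fun k => ?_
    filter_upwards [AEEqFun.coeFn_smul (β k) (x k), AEEqFun.coeFn_abs (x k)] with ω h₁ h₂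
    exact ⟨h₁, h₂⟩
  filter_upwards [AEEqFun.coeFn_abs (pSum p fun k => β k • x k),
    AEEqFun.coeFn_abs (∑ k, |x k|), coeFn_pSum p fun k => β k • x k,
    AEEqFun.coeFn_fun_finsetSum Finset.univ fun k => |x k|, hcoe] with ω h₁ h₂ h₃ h₄ h₅
  simp only [h₁, h₂, h₃, h₄, fun k => (h₅ k).1, fun k => (h₅ k).2]
  exact (abs_of_nonneg (by positivity)).trans_le
    ((rpow_sum_abs_mul_le_sum_abs hp hβ).trans (le_abs_self _))

theorem nrm_pSum_smul_le_strongSup (hp : 1 ≤ p) (hpq : p ≤ q) (hx : ∀ k, X.mem (x k))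
    {β : Fin n → ℝ} (hβ : β ∈ strongBall p q n) :
    X.nrm (pSum p fun k => β k • x k) ≤ strongSup X.nrm p q x := by
  refine le_ciSup (f := fun γ : strongBall p q n => X.nrm (pSum p fun k => γ.1 k • x k))
    ⟨X.nrm (∑ k, |x k|), ?_⟩ ⟨β, hβ⟩
  rintro _ ⟨γ, rfl⟩
  exact X.nrm_pSum_smul_le hp hx (abs_le_one_of_mem_strongBall (by linarith) hpq γ.2)

variable {X}

/-- `pConcave` does not force `0 ≤ C`: the zero lattice is `p`-concave with any constant. -/
theorem pConcave.nrm_pSum_eq_zero_of_neg (hconc : X.pConcave p C) (hC : C < 0)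
    (hx : ∀ k, X.mem (x k)) : X.nrm (pSum p x) = 0 := by
  have h := hconc n x hx
  have : 0 ≤ (∑ k, X.nrm (x k) ^ p) ^ p⁻¹ :=
    Real.rpow_nonneg (Finset.sum_nonneg fun k _ => Real.rpow_nonneg (X.nrm_nonneg _) _) _
  nlinarith [X.nrm_nonneg (pSum p x)]

theorem pConcave.mul_nrm_pSum_smul_le_mul_strongSup (hconc : X.pConcave p C) (hp : 1 ≤ p)
    (hpq : p ≤ q) (hx : ∀ k, X.mem (x k)) {β : Fin n → ℝ} (hβ : β ∈ strongBall p q n) :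
    C * X.nrm (pSum p fun k => β k • x k) ≤ C * strongSup X.nrm p q x := by
  rcases le_or_gt 0 C with hC | hC
  · exact mul_le_mul_of_nonneg_left (X.nrm_pSum_smul_le_strongSup hp hpq hx hβ) hC
  have hzero : ∀ γ : Fin n → ℝ, X.nrm (pSum p fun k => γ k • x k) = 0 := fun γ =>
    hconc.nrm_pSum_eq_zero_of_neg hC fun k => X.smul_mem _ _ (hx k)
  have : Nonempty (strongBall p q n) := ⟨⟨β, hβ⟩⟩
  simp [strongSup, hzero]

end BFL

theorem statement14_general {Ω : Type} [MeasurableSpace Ω] (μ : Measure Ω)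
    (X : BFL Ω μ) (p q C : ℝ) (hp : 1 ≤ p) (hpq : p ≤ q)
    (hconc : X.pConcave p C) :
    ∀ (n : ℕ) (x : Fin n → (Ω →ₘ[μ] ℝ)), (∀ k, X.mem (x k)) →
      (∑ k, X.nrm (x k) ^ q) ^ q⁻¹ ≤ C * strongSup X.nrm p q x := by
  intro n x hx
  have hp₀ : 0 < p := by linarith
  set t : Fin n → ℝ := fun k => X.nrm (x k)
  have ht : ∀ k, 0 ≤ t k := fun k => X.nrm_nonneg _
  set β := strongWeight p q t
  have hnrm : ∀ k, X.nrm (β k • x k) = β k * t k := fun k => by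
    rw [X.nrm_smul _ _ (hx k), abs_of_nonneg (strongWeight_nonneg ht k)]
  calc (∑ k, t k ^ q) ^ q⁻¹ = (∑ k, X.nrm (β k • x k) ^ p) ^ p⁻¹ := by
        simp only [hnrm]
        rw [sum_strongWeight_mul_rpow hp₀ (by linarith) ht,
          ← Real.rpow_mul (Finset.sum_nonneg fun k _ => Real.rpow_nonneg (ht k) q)]
        congr 1
        field_simp
    _ ≤ C * X.nrm (pSum p fun k => β k • x k) := hconc n _ fun k => X.smul_mem _ _ (hx k)
    _ ≤ C * strongSup X.nrm p q x :=
        hconc.mul_nrm_pSum_smul_le_mul_strongSup hp hpq hx (strongWeight_mem_strongBall hp₀ hpq ht)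

/-- if `X` is a `p`-concave Banach function lattice with concavity
constant `C` and `1 ≤ p ≤ q`, then the identity map of `X` is `p`-strongly `q`-concave
with constant `C`. -/
theorem statement14 {Ω : Type} [MeasurableSpace Ω] (μ : Measure Ω) [SigmaFinite μ]
    (X : BFL Ω μ) (p q C : ℝ) (hp : 1 ≤ p) (hpq : p ≤ q)
    (hconc : X.pConcave p C) :
    ∀ (n : ℕ) (x : Fin n → (Ω →ₘ[μ] ℝ)), (∀ k, X.mem (x k)) →
      (∑ k, X.nrm (x k) ^ q) ^ q⁻¹ ≤ C * strongSup X.nrm p q x :=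
  statement14_general μ X p q C hp hpq hconc

end
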